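/- SGD with SPS under interpolation, strongly convex case: if f_i are convex and L_i-smooth with f_i(x*) = f_i* for all i (interpolation) and f is μ-strongly convex, then SGD with step-size γ_k = 2(f_i(x^k) − f_i*)/‖∇f_i(x^k)‖² (i.e., SPS with c = 1/2) satisfies E‖x^k − x*‖² ≤ (1 − μ/L_max)^k ‖x^0 − x*‖². -/

import Mathlib

/-!
The descent lemma for the `L_i`-Lipschitz gradient of `f_i`, applied at `x - ∇f_i(x) / L_i`,
gives `‖∇f_i(x)‖² ≤ 2 L_i (f_i(x) - f_i*)`: the Polyak step size is at least `1 / L_max`.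
Expanding the square, an SPS step with step size `γ` satisfies
`‖x⁺ - x*‖² = ‖x - x*‖² - 2γ (⟪∇f_i(x), x - x*⟫ - (f_i(x) - f_i*))`, and by convexity and
interpolation the bracket is nonnegative, so `γ` may be replaced by `1 / L_max`. Averaged over
`i`, interpolation turns the bracket into `⟪∇f(x), x - x*⟫ - (f(x) - f(x*)) ≥ μ/2 ‖x - x*‖²`,
a contraction by `1 - μ / L_max` in mean, which iterates along the independent uniform indices.
-/

open scoped RealInnerProductSpace

open Finset

theorem uniform_mean_iterate_le {ι X : Type*} [Fintype ι] (T : ι → X → X) (V : X → ℝ)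
    (hV : ∀ x, 0 ≤ V x) {ρ : ℝ}
    (hT : ∀ x, 1 / (Fintype.card ι : ℝ) * ∑ i, V (T i x) ≤ ρ * V x)
    (x0 : X) (Y : (k : ℕ) → (Fin k → ι) → X) (hY0 : ∀ ω, Y 0 ω = x0)
    (hY : ∀ k (ω : Fin (k + 1) → ι),
      Y (k + 1) ω = T (ω (Fin.last k)) (Y k fun j => ω j.castSucc))
    (k : ℕ) :
    1 / (Fintype.card ι : ℝ) ^ k * ∑ ω : Fin k → ι, V (Y k ω) ≤ ρ ^ k * V x0 := by
  set c : ℝ := (Fintype.card ι : ℝ)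
  rcases lt_or_ge ρ 0 with hρ | hρ
  · -- a negative contraction factor forces `V = 0`
    have hV0 : ∀ x, V x = 0 := fun x =>
      le_antisymm (nonpos_of_mul_nonneg_right
        ((mul_nonneg (by positivity) (sum_nonneg fun i _ => hV _)).trans (hT x)) hρ) (hV x)
    simp [hV0]
  induction k with
  | zero => simp [hY0]
  | succ k ih =>
    have hsplit : ∑ ω : Fin (k + 1) → ι, V (Y (k + 1) ω) =
        ∑ ω : Fin k → ι, ∑ i, V (T i (Y k ω)) := by
      rw [← Fintype.sum_equiv (Fin.snocEquiv fun _ => ι) _ _ fun _ => rfl,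
        Fintype.sum_prod_type_right]
      simp [hY, Fin.snoc_castSucc]
    calc 1 / c ^ (k + 1) * ∑ ω : Fin (k + 1) → ι, V (Y (k + 1) ω)
        = 1 / c ^ k * ∑ ω : Fin k → ι, 1 / c * ∑ i, V (T i (Y k ω)) := by
          rw [hsplit, ← mul_sum, pow_succ]; ring
      _ ≤ 1 / c ^ k * ∑ ω : Fin k → ι, ρ * V (Y k ω) := by
          gcongr 1 / c ^ k * ?_
          exact sum_le_sum fun ω _ => hT _
      _ = ρ * (1 / c ^ k * ∑ ω : Fin k → ι, V (Y k ω)) := by rw [← mul_sum]; ring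
      _ ≤ ρ * (ρ ^ k * V x0) := by gcongr
      _ = ρ ^ (k + 1) * V x0 := by ring

variable {E : Type*} [NormedAddCommGroup E] [InnerProductSpace ℝ E]

-- Also for `v = 0`, where the step size is `2 * r / 0 = 0`.
theorem norm_sub_polyak_smul_sq (a v : E) (r : ℝ) :
    ‖a - (2 * r / ‖v‖ ^ 2) • v‖ ^ 2 = ‖a‖ ^ 2 - 2 * (2 * r / ‖v‖ ^ 2) * (⟪v, a⟫ - r) := by
  rcases eq_or_ne v 0 with rfl | hv
  · simp
  have : ‖v‖ ^ 2 ≠ 0 := by positivity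
  rw [norm_sub_sq_real, norm_smul, real_inner_smul_right, real_inner_comm, mul_pow,
    Real.norm_eq_abs, sq_abs]
  field_simp
  ring

theorem norm_sub_polyak_smul_sq_le {a v : E} {r L : ℝ} (hL : 0 < L)
    (hv : ‖v‖ ^ 2 ≤ 2 * L * r) (hr : r ≤ ⟪v, a⟫) :
    ‖a - (2 * r / ‖v‖ ^ 2) • v‖ ^ 2 ≤ ‖a‖ ^ 2 - 2 / L * (⟪v, a⟫ - r) := by
  rw [norm_sub_polyak_smul_sq]
  rcases eq_or_ne v 0 with rfl | hv0
  · have hr0 : r = 0 := le_antisymm (by simpa using hr) (by simpa [hL] using hv)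
    simp [hr0]
  · have hγ : 1 / L ≤ 2 * r / ‖v‖ ^ 2 := by
      rw [div_le_div_iff₀ hL (by positivity)]; linarith
    have hγD := mul_le_mul_of_nonneg_right hγ (sub_nonneg.2 hr)
    rw [show 2 / L = 2 * (1 / L) by ring]
    linarith

section Gradient

variable [CompleteSpace E]

theorem HasGradientAt.hasDerivAt_comp_add_smul {g : E → ℝ} {g' x v : E} {t : ℝ}
    (h : HasGradientAt g g' (x + t • v)) :
    HasDerivAt (fun s : ℝ => g (x + s • v)) ⟪g', v⟫ t := by
  have hline : HasDerivAt (fun s : ℝ => x + s • v) v t := by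
    simpa using ((hasDerivAt_id t).smul_const v).const_add x
  have := h.hasFDerivAt.comp_hasDerivAt t hline
  simp only [InnerProductSpace.toDual_apply_apply] at this
  exact this

theorem HasGradientAt.const_mul_sum {ι : Type*} [Fintype ι] {f : ι → E → ℝ} {g' : ι → E}
    {x : E} (h : ∀ i, HasGradientAt (f i) (g' i) x) (c : ℝ) :
    HasGradientAt (fun y => c * ∑ i, f i y) (c • ∑ i, g' i) x := by
  rw [hasGradientAt_iff_hasFDerivAt, map_smul, map_sum]
  exact (HasFDerivAt.fun_sum fun i _ => (h i).hasFDerivAt).const_mul c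

section LipschitzGradient

variable {g : E → ℝ} {G : E → E} {L : ℝ}

theorem le_add_inner_add_sq_of_lipschitz_gradient (hg : ∀ x, HasGradientAt g (G x) x)
    (hG : ∀ x y, ‖G x - G y‖ ≤ L * ‖x - y‖) (x y : E) :
    g y ≤ g x + ⟪G x, y - x⟫ + L / 2 * ‖y - x‖ ^ 2 := by
  set v := y - x
  let φ : ℝ → ℝ := fun t => g (x + t • v) - t * ⟪G x, v⟫ - L / 2 * t ^ 2 * ‖v‖ ^ 2
  have hφ : ∀ t, HasDerivAt φ (⟪G (x + t • v), v⟫ - ⟪G x, v⟫ - L * t * ‖v‖ ^ 2) t := fun t =>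
    (((hg _).hasDerivAt_comp_add_smul.sub ((hasDerivAt_id t).mul_const _)).sub
      (((hasDerivAt_pow 2 t).const_mul (L / 2)).mul_const _)).congr_deriv (by ring)
  have hφ_anti : AntitoneOn φ (Set.Icc 0 1) := by
    refine antitoneOn_of_hasDerivWithinAt_nonpos (convex_Icc 0 1)
      (fun t _ => (hφ t).continuousAt.continuousWithinAt) (fun t _ => (hφ t).hasDerivWithinAt)
      fun t ht => ?_
    rw [interior_Icc] at ht
    have hGt : ‖G (x + t • v) - G x‖ ≤ L * (t * ‖v‖) := by
      simpa [norm_smul, abs_of_pos ht.1] using hG (x + t • v) x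
    calc ⟪G (x + t • v), v⟫ - ⟪G x, v⟫ - L * t * ‖v‖ ^ 2
        = ⟪G (x + t • v) - G x, v⟫ - L * t * ‖v‖ ^ 2 := by rw [inner_sub_left]
      _ ≤ ‖G (x + t • v) - G x‖ * ‖v‖ - L * (t * ‖v‖) * ‖v‖ := by
          rw [sq, ← mul_assoc, mul_assoc L]; gcongr; exact real_inner_le_norm _ _
      _ ≤ 0 := by nlinarith [norm_nonneg v]
  have h01 := hφ_anti (by simp) (by simp) zero_le_one
  simp only [φ, zero_smul, add_zero, one_smul, zero_mul, sub_zero, one_mul, one_pow, mul_one,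
    ne_eq, OfNat.ofNat_ne_zero, not_false_eq_true, zero_pow, v, add_sub_cancel] at h01
  linarith

theorem norm_sq_le_of_lipschitz_gradient (hg : ∀ x, HasGradientAt g (G x) x)
    (hG : ∀ x y, ‖G x - G y‖ ≤ L * ‖x - y‖) (hL : 0 < L) {s : ℝ} (hs : ∀ y, s ≤ g y) (x : E) :
    ‖G x‖ ^ 2 ≤ 2 * L * (g x - s) := by
  have h := le_add_inner_add_sq_of_lipschitz_gradient hg hG x (x - L⁻¹ • G x)
  rw [sub_sub_cancel_left, norm_neg, norm_smul, inner_neg_right, real_inner_smul_right,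
    real_inner_self_eq_norm_sq, Real.norm_of_nonneg (inv_nonneg.2 hL.le)] at h
  have hquad : L / 2 * (L⁻¹ * ‖G x‖) ^ 2 = L⁻¹ * ‖G x‖ ^ 2 / 2 := by field_simp
  have hgap : L⁻¹ * ‖G x‖ ^ 2 ≤ 2 * (g x - s) := by linarith [hs (x - L⁻¹ • G x)]
  calc ‖G x‖ ^ 2 = L * (L⁻¹ * ‖G x‖ ^ 2) := by field_simp
    _ ≤ L * (2 * (g x - s)) := by gcongr
    _ = 2 * L * (g x - s) := by ring

theorem polyak_step_sq_dist_le {Λ : ℝ} (hg : ∀ x, HasGradientAt g (G x) x)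
    (hG : ∀ x y, ‖G x - G y‖ ≤ L * ‖x - y‖) (hL : 0 < L) (hLΛ : L ≤ Λ)
    (hconv : ∀ x y, g x + ⟪G x, y - x⟫ ≤ g y)
    {xstar : E} (hmin : ∀ y, g xstar ≤ g y) (x : E) :
    ‖x - (2 * (g x - g xstar) / ‖G x‖ ^ 2) • G x - xstar‖ ^ 2
      ≤ ‖x - xstar‖ ^ 2 - 2 / Λ * (⟪G x, x - xstar⟫ - (g x - g xstar)) := by
  have hgap : g x - g xstar ≤ ⟪G x, x - xstar⟫ := by
    have := hconv x xstar
    rw [← neg_sub, inner_neg_right] at this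
    linarith
  have hgrad_sq : ‖G x‖ ^ 2 ≤ 2 * Λ * (g x - g xstar) :=
    (norm_sq_le_of_lipschitz_gradient hg hG hL hmin x).trans
      (by gcongr; linarith [hmin x])
  rw [sub_right_comm]
  exact norm_sub_polyak_smul_sq_le (hL.trans_le hLΛ) hgrad_sq hgap

end LipschitzGradient

theorem polyak_step_mean_sq_dist_le {ι : Type*} [Fintype ι] [Nonempty ι] {f : ι → E → ℝ}
    {G : ι → E → E} {L : ι → ℝ} {Λ μ : ℝ} {F : E → ℝ} {xstar x gF : E}
    (hgrad : ∀ i x, HasGradientAt (f i) (G i x) x)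
    (hsmooth : ∀ i x y, ‖G i x - G i y‖ ≤ L i * ‖x - y‖) (hL : ∀ i, 0 < L i)
    (hLΛ : ∀ i, L i ≤ Λ) (hconv : ∀ i x y, f i x + ⟪G i x, y - x⟫ ≤ f i y)
    (hmin : ∀ i y, f i xstar ≤ f i y) (hF : ∀ x, F x = 1 / (Fintype.card ι : ℝ) * ∑ i, f i x)
    (hgF : HasGradientAt F gF x)
    (hsc : F x + ⟪gF, xstar - x⟫ + μ / 2 * ‖xstar - x‖ ^ 2 ≤ F xstar) :
    1 / (Fintype.card ι : ℝ) *
      ∑ i, ‖x - (2 * (f i x - f i xstar) / ‖G i x‖ ^ 2) • G i x - xstar‖ ^ 2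
        ≤ (1 - μ / Λ) * ‖x - xstar‖ ^ 2 := by
  have hgF_eq : gF = (1 / (Fintype.card ι : ℝ)) • ∑ i, G i x :=
    hgF.unique (funext hF ▸ HasGradientAt.const_mul_sum (fun i => hgrad i x) _)
  rw [← neg_sub x xstar, inner_neg_right, norm_neg] at hsc
  calc _ ≤ 1 / (Fintype.card ι : ℝ) * ∑ i, (‖x - xstar‖ ^ 2
        - 2 / Λ * (⟪G i x, x - xstar⟫ - (f i x - f i xstar))) := by
        gcongr with i
        exact polyak_step_sq_dist_le (hgrad i) (hsmooth i) (hL i) (hLΛ i) (hconv i) (hmin i) x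
    _ = ‖x - xstar‖ ^ 2 - 2 / Λ * (⟪gF, x - xstar⟫ - (F x - F xstar)) := by
        simp only [hgF_eq, hF, real_inner_smul_left, sum_inner, sum_sub_distrib, sum_const,
          card_univ, nsmul_eq_mul, ← mul_sum]
        field_simp
    _ ≤ ‖x - xstar‖ ^ 2 - 2 / Λ * (μ / 2 * ‖x - xstar‖ ^ 2) := by
        have : 0 < Λ := (hL (Classical.arbitrary ι)).trans_le (hLΛ _)
        gcongr
        linarith
    _ = (1 - μ / Λ) * ‖x - xstar‖ ^ 2 := by ring

end Gradient

theorem stmt5_general {d n : ℕ} (hn : 0 < n)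
    (f : Fin n → EuclideanSpace ℝ (Fin d) → ℝ)
    (G : Fin n → EuclideanSpace ℝ (Fin d) → EuclideanSpace ℝ (Fin d))
    (hgrad : ∀ i x, HasGradientAt (f i) (G i x) x)
    (hconv : ∀ i x y, f i y ≥ f i x + ⟪G i x, y - x⟫)
    (L : Fin n → ℝ) (hL : ∀ i, 0 < L i)
    (hsmooth : ∀ i x y, ‖G i x - G i y‖ ≤ L i * ‖x - y‖)
    (fstar : Fin n → ℝ) (hfstar : ∀ i, IsGLB (Set.range (f i)) (fstar i))
    (F : EuclideanSpace ℝ (Fin d) → ℝ) (hF : ∀ x, F x = (1 / (n : ℝ)) * ∑ i, f i x)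
    (GF : EuclideanSpace ℝ (Fin d) → EuclideanSpace ℝ (Fin d))
    (hGF : ∀ x, HasGradientAt F (GF x) x)
    (μ : ℝ)
    (hsc : ∀ x y, F y ≥ F x + ⟪GF x, y - x⟫ + μ / 2 * ‖y - x‖ ^ 2)
    (xstar : EuclideanSpace ℝ (Fin d))
    (hinterp : ∀ i, f i xstar = fstar i)
    (Lmax : ℝ) (hLmax : Lmax = Finset.univ.sup' ⟨⟨0, hn⟩, Finset.mem_univ _⟩ L)
    (x0 : EuclideanSpace ℝ (Fin d))
    (Y : (k : ℕ) → (Fin k → Fin n) → EuclideanSpace ℝ (Fin d))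
    (hY0 : ∀ ω, Y 0 ω = x0)
    (hYstep : ∀ (k : ℕ) (ω : Fin (k + 1) → Fin n),
      Y (k + 1) ω =
        Y k (fun j => ω j.castSucc) -
          (2 * (f (ω (Fin.last k)) (Y k (fun j => ω j.castSucc)) -
                fstar (ω (Fin.last k))) /
            ‖G (ω (Fin.last k)) (Y k (fun j => ω j.castSucc))‖ ^ 2) •
            G (ω (Fin.last k)) (Y k (fun j => ω j.castSucc))) :
    ∀ k : ℕ, (1 / (n : ℝ) ^ k) * ∑ ω : Fin k → Fin n, ‖Y k ω - xstar‖ ^ 2 ≤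
      (1 - μ / Lmax) ^ k * ‖x0 - xstar‖ ^ 2 := by
  have : Nonempty (Fin n) := ⟨⟨0, hn⟩⟩
  have hL_le : ∀ i, L i ≤ Lmax := fun i => hLmax ▸ le_sup' L (mem_univ i)
  have hmin : ∀ i y, f i xstar ≤ f i y := fun i y => hinterp i ▸ (hfstar i).1 ⟨y, rfl⟩
  have hmean := fun x => polyak_step_mean_sq_dist_le hgrad hsmooth hL hL_le hconv hmin
    (by simpa only [Fintype.card_fin] using hF) (hGF x) (hsc x xstar)
  simp only [hinterp] at hmean
  simpa using uniform_mean_iterate_le _ (fun x => ‖x - xstar‖ ^ 2) (fun _ => by positivity)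
    hmean x0 Y hY0 hYstep

/-- SGD with SPS (`c = 1/2`) under interpolation for strongly convex `f`:
`E‖x^k − x*‖² ≤ (1 − μ/L_max)^k ‖x^0 − x*‖²`, where the expectation is over the i.i.d.
uniform indices of the first `k` steps. -/
theorem stmt5 {d n : ℕ} (hn : 0 < n)
    (f : Fin n → EuclideanSpace ℝ (Fin d) → ℝ)
    (G : Fin n → EuclideanSpace ℝ (Fin d) → EuclideanSpace ℝ (Fin d))
    (hgrad : ∀ i x, HasGradientAt (f i) (G i x) x)
    (hconv : ∀ i x y, f i y ≥ f i x + ⟪G i x, y - x⟫)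
    (L : Fin n → ℝ) (hL : ∀ i, 0 < L i)
    (hsmooth : ∀ i x y, ‖G i x - G i y‖ ≤ L i * ‖x - y‖)
    (fstar : Fin n → ℝ) (hfstar : ∀ i, IsGLB (Set.range (f i)) (fstar i))
    (F : EuclideanSpace ℝ (Fin d) → ℝ) (hF : ∀ x, F x = (1 / (n : ℝ)) * ∑ i, f i x)
    (GF : EuclideanSpace ℝ (Fin d) → EuclideanSpace ℝ (Fin d))
    (hGF : ∀ x, HasGradientAt F (GF x) x)
    (μ : ℝ) (hμ : 0 < μ)
    (hsc : ∀ x y, F y ≥ F x + ⟪GF x, y - x⟫ + μ / 2 * ‖y - x‖ ^ 2)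
    (xstar : EuclideanSpace ℝ (Fin d)) (hxstar : ∀ y, F xstar ≤ F y)
    (hinterp : ∀ i, f i xstar = fstar i)
    (Lmax : ℝ) (hLmax : Lmax = Finset.univ.sup' ⟨⟨0, hn⟩, Finset.mem_univ _⟩ L)
    (x0 : EuclideanSpace ℝ (Fin d))
    (Y : (k : ℕ) → (Fin k → Fin n) → EuclideanSpace ℝ (Fin d))
    (hY0 : ∀ ω, Y 0 ω = x0)
    (hYstep : ∀ (k : ℕ) (ω : Fin (k + 1) → Fin n),
      Y (k + 1) ω =
        Y k (fun j => ω j.castSucc) -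
          (2 * (f (ω (Fin.last k)) (Y k (fun j => ω j.castSucc)) -
                fstar (ω (Fin.last k))) /
            ‖G (ω (Fin.last k)) (Y k (fun j => ω j.castSucc))‖ ^ 2) •
            G (ω (Fin.last k)) (Y k (fun j => ω j.castSucc))) :
    ∀ k : ℕ, (1 / (n : ℝ) ^ k) * ∑ ω : Fin k → Fin n, ‖Y k ω - xstar‖ ^ 2 ≤
      (1 - μ / Lmax) ^ k * ‖x0 - xstar‖ ^ 2 :=
  stmt5_general hn f G hgrad hconv L hL hsmooth fstar hfstar F hF GF hGF μ hsc xstar hinterp Lmax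
    hLmax x0 Y hY0 hYstep
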